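/- Let μ ≥ μ₀ > 0 a.e. and let B : [0,∞) → [0,∞) be bounded by c₁. Define x(t,a) = B(t-a)·exp(-∫₀^a μ(ξ)dξ) for 0 ≤ a < t and x(t,a) = 0 for a ≥ t. If |B(s+h) - B(s)| ≤ c₄(h) for all s ∈ [0,t], then ∫₀^∞ |x(t,a+h) - x(t,a)| da ≤ t·c₄(h) + t·c₁·(1 - e^{-h·‖μ‖_∞}) + 2h·c₁ for every h > 0. -/

import Mathlib

open MeasureTheory

theorem translation_estimate (μ₀ Cμ c₁ c₄ t h : ℝ) (hμ₀ : 0 < μ₀) (ht : 0 < t) (hh : 0 < h)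
    (hc₁ : 0 ≤ c₁) (hc₄ : 0 ≤ c₄)
    (μ : ℝ → ℝ) (hμmeas : Measurable μ) (hμ : ∀ a, μ₀ ≤ μ a ∧ μ a ≤ Cμ)
    (B : ℝ → ℝ) (hBmeas : Measurable B) (hBbd : ∀ s, 0 ≤ B s ∧ B s ≤ c₁)
    (hB : ∀ s ∈ Set.Icc (0:ℝ) t, |B (s + h) - B s| ≤ c₄)
    (x : ℝ → ℝ)
    (hx : ∀ a, x a = if 0 ≤ a ∧ a < t
        then B (t - a) * Real.exp (-(∫ ξ in (0:ℝ)..a, μ ξ)) else 0) :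
    ∫ a in Set.Ioi (0:ℝ), |x (a + h) - x a| ≤
      t * c₄ + t * c₁ * (1 - Real.exp (-h * Cμ)) + 2 * h * c₁ := by
  have hμnn : ∀ ξ, 0 ≤ μ ξ := fun ξ => (hμ₀.trans_le (hμ ξ).1).le
  have hCμpos : 0 < Cμ := hμ₀.trans_le ((hμ 0).1.trans (hμ 0).2)
  set M : ℝ → ℝ := fun a => ∫ ξ in (0:ℝ)..a, μ ξ with hMdef
  have hint : ∀ a b : ℝ, IntervalIntegrable μ volume a b := fun a b =>
    (intervalIntegrable_const (c := Cμ)).mono_fun' hμmeas.aestronglyMeasurable.restrict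
      (Filter.Eventually.of_forall fun ξ => by
        simpa [Real.norm_eq_abs, abs_of_nonneg (hμnn ξ)] using (hμ ξ).2)
  have hMcont : Continuous M := intervalIntegral.continuous_primitive hint 0
  have hM0 : ∀ a, 0 ≤ a → 0 ≤ M a := fun a ha =>
    intervalIntegral.integral_nonneg ha fun ξ _ => hμnn ξ
  have hMadd : ∀ a : ℝ, M (a + h) = M a + ∫ ξ in a..(a+h), μ ξ := fun a =>
    (intervalIntegral.integral_add_adjacent_intervals (hint 0 a) (hint a (a+h))).symm
  have hseg_nonneg : ∀ a : ℝ, 0 ≤ ∫ ξ in a..(a+h), μ ξ := fun a =>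
    intervalIntegral.integral_nonneg (by linarith) fun ξ _ => hμnn ξ
  have hseg_le : ∀ a : ℝ, (∫ ξ in a..(a+h), μ ξ) ≤ h * Cμ := by
    intro a
    calc (∫ ξ in a..(a+h), μ ξ) ≤ ∫ ξ in a..(a+h), Cμ :=
          intervalIntegral.integral_mono_on (by linarith) (hint a _)
            intervalIntegrable_const (fun ξ _ => (hμ ξ).2)
      _ = h * Cμ := by rw [intervalIntegral.integral_const]; simp [smul_eq_mul]
  have hxeq : x = fun a => if 0 ≤ a ∧ a < t then B (t - a) * Real.exp (-(M a)) else 0 :=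
    funext hx
  have hxmeas : Measurable x := by
    rw [hxeq]
    exact Measurable.ite
      ((measurableSet_le measurable_const measurable_id).inter
        (measurableSet_lt measurable_id measurable_const))
      ((hBmeas.comp (measurable_const.sub measurable_id)).mul
        ((Real.continuous_exp.comp hMcont.neg).measurable))
      measurable_const
  have hxbd : ∀ a, 0 ≤ x a ∧ x a ≤ c₁ := by
    intro a
    rw [hx a]
    split_ifs with hcase
    · refine ⟨mul_nonneg (hBbd _).1 (Real.exp_pos _).le, ?_⟩
      have he1 : Real.exp (-(M a)) ≤ 1 :=
        Real.exp_le_one_iff.2 (by simpa using hM0 a hcase.1)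
      calc B (t - a) * Real.exp (-(M a)) ≤ c₁ * 1 :=
            mul_le_mul (hBbd _).2 he1 (Real.exp_pos _).le hc₁
        _ = c₁ := mul_one c₁
    · exact ⟨le_rfl, hc₁⟩
  set E := Real.exp (-h * Cμ) with hE
  have hEle1 : E ≤ 1 := Real.exp_le_one_iff.2 (by nlinarith)
  set C2 := c₄ + c₁ * (1 - E) with hC2def
  have hC2 : 0 ≤ C2 := add_nonneg hc₄ (mul_nonneg hc₁ (by linarith))
  -- key pointwise bound in the overlap region
  have key1 : ∀ a : ℝ, 0 < a → a + h < t → |x (a + h) - x a| ≤ C2 := by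
    intro a ha hat
    have ha' : 0 ≤ a := ha.le
    have hat' : a < t := by linarith
    rw [hx (a + h), hx a, if_pos ⟨by linarith, hat⟩, if_pos ⟨ha', hat'⟩]
    have hdecomp : B (t - (a + h)) * Real.exp (-(M (a + h))) -
        B (t - a) * Real.exp (-(M a)) =
        (B (t - (a + h)) - B (t - a)) * Real.exp (-(M (a + h))) +
        B (t - a) * (Real.exp (-(M (a + h))) - Real.exp (-(M a))) := by ring
    rw [hdecomp]
    have hexp1 : Real.exp (-(M (a + h))) ≤ 1 :=
      Real.exp_le_one_iff.2 (by simpa using hM0 (a + h) (by linarith))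
    have hterm1 : |(B (t - (a + h)) - B (t - a)) * Real.exp (-(M (a + h)))| ≤ c₄ := by
      rw [abs_mul, abs_of_nonneg (Real.exp_pos _).le]
      have hs : t - (a + h) ∈ Set.Icc (0:ℝ) t := ⟨by linarith, by linarith⟩
      have := hB _ hs
      rw [show t - (a + h) + h = t - a by ring] at this
      calc |B (t - (a + h)) - B (t - a)| * Real.exp (-(M (a + h)))
          ≤ c₄ * 1 := mul_le_mul (by rw [abs_sub_comm]; exact this) hexp1
            (Real.exp_pos _).le hc₄
        _ = c₄ := mul_one c₄
    have hterm2 : |B (t - a) * (Real.exp (-(M (a + h))) - Real.exp (-(M a)))| ≤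
        c₁ * (1 - E) := by
      rw [abs_mul, abs_of_nonneg (hBbd _).1]
      have hMa : Real.exp (-(M (a + h))) = Real.exp (-(M a)) * Real.exp (-(∫ ξ in a..(a+h), μ ξ)) := by
        rw [← Real.exp_add, hMadd a]; ring_nf
      have hea : Real.exp (-(M a)) ≤ 1 :=
        Real.exp_le_one_iff.2 (by simpa using hM0 a ha')
      have heΔ1 : Real.exp (-(∫ ξ in a..(a+h), μ ξ)) ≤ 1 :=
        Real.exp_le_one_iff.2 (by simpa using hseg_nonneg a)
      have heΔ2 : E ≤ Real.exp (-(∫ ξ in a..(a+h), μ ξ)) :=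
        Real.exp_le_exp.2 (by have := hseg_le a; linarith)
      have habs : |Real.exp (-(M (a + h))) - Real.exp (-(M a))| ≤ 1 - E := by
        rw [abs_sub_comm, abs_of_nonneg (by rw [hMa]; nlinarith [Real.exp_pos (-(M a))])]
        rw [hMa]
        nlinarith [Real.exp_pos (-(M a))]
      exact mul_le_mul (hBbd _).2 habs (abs_nonneg _) hc₁
    exact le_of_le_of_eq ((abs_add_le _ _).trans (add_le_add hterm1 hterm2)) hC2def.symm
  have key2 : ∀ a : ℝ, t ≤ a + h → |x (a + h) - x a| ≤ c₁ := by
    intro a hta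
    have hxah : x (a + h) = 0 := by
      rw [hx (a + h), if_neg]; rintro ⟨-, hlt⟩; linarith
    rw [hxah, zero_sub, abs_neg, abs_of_nonneg (hxbd a).1]
    exact (hxbd a).2
  -- reduce integral to Ioc 0 t
  have hfmeas : Measurable fun a => |x (a + h) - x a| :=
    ((hxmeas.comp (measurable_add_const h)).sub hxmeas).abs
  have hf2c₁ : ∀ a, |x (a + h) - x a| ≤ 2 * c₁ := by
    intro a
    calc |x (a + h) - x a| ≤ |x (a + h)| + |x a| := abs_sub _ _
      _ ≤ 2 * c₁ := by
          rw [abs_of_nonneg (hxbd _).1, abs_of_nonneg (hxbd _).1]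
          have := (hxbd (a + h)).2; have := (hxbd a).2; linarith
  have hfint : IntegrableOn (fun a => |x (a + h) - x a|) (Set.Ioc 0 t) volume :=
    Measure.integrableOn_of_bounded (M := 2 * c₁) measure_Ioc_lt_top.ne
      hfmeas.aestronglyMeasurable
      (Filter.Eventually.of_forall fun a => by
        rw [Real.norm_eq_abs, abs_abs]; exact hf2c₁ a)
  have hzeroOn : ∀ a ∈ Set.Ioi t, |x (a + h) - x a| = 0 := by
    intro a (hat : t < a)
    have h1 : x a = 0 := by rw [hx a, if_neg]; rintro ⟨-, hlt⟩; linarith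
    have h2 : x (a + h) = 0 := by rw [hx (a + h), if_neg]; rintro ⟨-, hlt⟩; linarith
    simp [h1, h2]
  have hsplit : ∫ a in Set.Ioi (0:ℝ), |x (a + h) - x a| =
      ∫ a in Set.Ioc (0:ℝ) t, |x (a + h) - x a| := by
    rw [← Set.Ioc_union_Ioi_eq_Ioi ht.le,
      setIntegral_union (Set.Ioc_disjoint_Ioi le_rfl) measurableSet_Ioi hfint
        ((integrableOn_congr_fun hzeroOn measurableSet_Ioi).2 (integrableOn_zero)),
      setIntegral_congr_fun measurableSet_Ioi hzeroOn]
    simp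
  rw [hsplit]
  -- dominating function
  set g : ℝ → ℝ := fun a => C2 + Set.indicator (Set.Icc (t - h) t) (fun _ => c₁) a with hgdef
  have hgle : ∀ a ∈ Set.Ioc (0:ℝ) t, |x (a + h) - x a| ≤ g a := by
    rintro a ⟨ha, hat⟩
    by_cases hcase : a + h < t
    · calc |x (a + h) - x a| ≤ C2 := key1 a ha hcase
        _ ≤ g a := le_add_of_nonneg_right (Set.indicator_nonneg (fun _ _ => hc₁) a)
    · push_neg at hcase
      have hmem : a ∈ Set.Icc (t - h) t := ⟨by linarith, hat⟩
      calc |x (a + h) - x a| ≤ c₁ := key2 a hcase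
        _ ≤ g a := by rw [hgdef]; simp only [Set.indicator_of_mem hmem]; linarith
  have hgint : IntegrableOn g (Set.Ioc 0 t) volume := by
    apply Integrable.add
    · exact integrableOn_const measure_Ioc_lt_top.ne
    · exact (IntegrableOn.integrable_indicator
        (integrableOn_const measure_Icc_lt_top.ne) measurableSet_Icc).integrableOn
  have hmono := setIntegral_mono_on hfint hgint measurableSet_Ioc hgle
  refine hmono.trans ?_
  have hintg : ∫ a in Set.Ioc (0:ℝ) t, g a =
      t * C2 + (volume (Set.Ioc 0 t ∩ Set.Icc (t - h) t)).toReal * c₁ := by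
    rw [hgdef, integral_add (integrableOn_const (C := C2) measure_Ioc_lt_top.ne)
      ((IntegrableOn.integrable_indicator
        (integrableOn_const (C := c₁) measure_Icc_lt_top.ne) measurableSet_Icc).integrableOn)]
    rw [setIntegral_const, setIntegral_indicator measurableSet_Icc, setIntegral_const]
    simp [Real.volume_Ioc, ENNReal.toReal_ofReal ht.le, smul_eq_mul, max_eq_left ht.le, measureReal_def]
  rw [hintg]
  have hvol : (volume (Set.Ioc 0 t ∩ Set.Icc (t - h) t)).toReal ≤ h := by
    have h1 : volume (Set.Ioc 0 t ∩ Set.Icc (t - h) t) ≤ volume (Set.Icc (t - h) t) :=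
      measure_mono Set.inter_subset_right
    have h2 : volume (Set.Icc (t - h) t) = ENNReal.ofReal h := by
      rw [Real.volume_Icc]; ring_nf
    calc (volume (Set.Ioc 0 t ∩ Set.Icc (t - h) t)).toReal
        ≤ (volume (Set.Icc (t - h) t)).toReal :=
          ENNReal.toReal_mono (by rw [h2]; exact ENNReal.ofReal_ne_top) h1
      _ = h := by rw [h2, ENNReal.toReal_ofReal hh.le]
  have hmul : (volume (Set.Ioc 0 t ∩ Set.Icc (t - h) t)).toReal * c₁ ≤ h * c₁ :=
    mul_le_mul_of_nonneg_right hvol hc₁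
  rw [hC2def]
  nlinarith
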